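/- When algorithm Counting-Backoff is executed on a channel with collision detection against a 1-activating adversary of type (ρ, b) with ρ < 1/3 and b > 1, every injected packet is heard within (3b − 3)/(1 − 3ρ) rounds of its injection; that is, the packet latency of Counting-Backoff against such an adversary is at most (3b − 3)/(1 − 3ρ). -/

import Mathlib

/-- Admissibility of a 1-activating injection pattern `a` (in round `t`, a fresh passive
station labelled `t` is activated with `a t` packets, when `a t > 0`) for the leaky-bucket
adversary of type `(ρ, b)`: in every contiguous interval of rounds the total number of
injected packets is at most `ρ·|τ| + b`. -/
def Admissible (ρ : ℝ) (b : ℕ) (a : ℕ → ℕ) : Prop :=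
  ∀ s n : ℕ, ((∑ t ∈ Finset.Ico s (s + n), a t : ℕ) : ℝ) ≤ ρ * n + b

/-- One round of algorithm Counting-Backoff on a channel with collision detection.
A configuration `c` assigns to every station `v` (identified with its activation round)
its number `c.1 v` of pending packets and its integer `c.2 v` = backoff_counter, both at
the beginning of the round.  An active station transmits iff its backoff_counter is `≤ 1`;
after a collision every active station increments its counter, after a silent round it
decrements it; a station whose own packet was heard sets the counter to 1 if it is still
active, and a passive station has counter 0.  At the end of round `t` the station `t`
receives its `a t` injected packets (with counter 0). -/
def cbStep (a : ℕ → ℕ) (t : ℕ) (c : (ℕ → ℕ) × (ℕ → ℤ)) : (ℕ → ℕ) × (ℕ → ℤ) :=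
  let pend := c.1
  let ctr := c.2
  let tx : Finset ℕ := (Finset.range t).filter fun v => 0 < pend v ∧ ctr v ≤ 1
  (fun v => (if v ∈ tx ∧ tx.card = 1 then pend v - 1 else pend v) + (if v = t then a t else 0),
   fun v =>
    if pend v = 0 then 0
    else if v ∈ tx ∧ tx.card = 1 then (if pend v - 1 = 0 then 0 else 1)
    else if 2 ≤ tx.card then ctr v + 1
    else if tx.card = 0 then ctr v - 1
    else ctr v)

/-- The configuration of the execution of Counting-Backoff against the 1-activating
injection pattern `a` at the beginning of round `t`: `(cbCfg a t).1 v` is the number of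
packets pending at station `v` and `(cbCfg a t).2 v` is its backoff_counter. -/
def cbCfg (a : ℕ → ℕ) : ℕ → (ℕ → ℕ) × (ℕ → ℤ)
  | 0 => (fun _ => 0, fun _ => 0)
  | t + 1 => cbStep a t (cbCfg a t)

/-!
Older active stations always carry strictly larger backoff counters, and only the station
activated in the previous round can have counter `0` (`CountingBackoff.CounterInvariant`).
Hence a heard station is the youngest active one, and every collision involves the station
activated in the round before.

Let station `v` still be pending at round `t`. If its first transmission, in round `v + 1`,
collided, then it collided with an older station `w`, which cannot be heard while `v` is
pending; induction on `v` applies to `w`. Otherwise, along the rounds `s` in which `v` is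
pending, the potential `s + counter v + 2 · pending v + (packets of younger stations)` grows by
at most the packets injected plus two per collision, and each collision is charged to a packet
injected in the round before. This gives `t - v + 2 ≤ 2 · a v + 3 · (packets injected in
(v, t))`, and the leaky-bucket bound on `[v, t)` turns it into `(t - v)(1 - 3ρ) ≤ 3b - 3`.
-/

open Finset

namespace CountingBackoff

variable {α : Type*} {a : ℕ → ℕ} {m n r s t u v w x : ℕ}

lemma mem_and_card_eq_one_iff {t : Finset α} {x : α} : x ∈ t ∧ #t = 1 ↔ t = {x} := by
  refine ⟨fun ⟨hx, h1⟩ => ?_, fun h => by simp [h]⟩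
  obtain ⟨y, rfl⟩ := card_eq_one.1 h1
  rw [mem_singleton.1 hx]

lemma eq_singleton_or_two_le_card_or_card_eq_zero (t : Finset α) :
    (∃ x, t = {x}) ∨ 2 ≤ #t ∨ #t = 0 := by
  obtain h | h | h : #t = 1 ∨ 2 ≤ #t ∨ #t = 0 := by omega
  exacts [Or.inl (card_eq_one.1 h), Or.inr (Or.inl h), Or.inr (Or.inr h)]

def pending (a : ℕ → ℕ) (r u : ℕ) : ℕ := (cbCfg a r).1 u

def counter (a : ℕ → ℕ) (r u : ℕ) : ℤ := (cbCfg a r).2 u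

def transmitters (a : ℕ → ℕ) (r : ℕ) : Finset ℕ :=
  (range r).filter fun u => 0 < pending a r u ∧ counter a r u ≤ 1

lemma mem_transmitters :
    u ∈ transmitters a r ↔ u < r ∧ 0 < pending a r u ∧ counter a r u ≤ 1 := by
  simp [transmitters]

lemma lt_of_mem_transmitters (hu : u ∈ transmitters a r) : u < r :=
  (mem_transmitters.1 hu).1

lemma pending_pos_of_mem_transmitters (hu : u ∈ transmitters a r) : 0 < pending a r u :=
  (mem_transmitters.1 hu).2.1

lemma pending_succ (a : ℕ → ℕ) (r u : ℕ) : pending a (r + 1) u =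
    (if transmitters a r = {u} then pending a r u - 1 else pending a r u) +
      if u = r then a r else 0 := by
  rw [← if_congr mem_and_card_eq_one_iff rfl rfl]
  rfl

lemma counter_succ (a : ℕ → ℕ) (r u : ℕ) : counter a (r + 1) u =
    if pending a r u = 0 then 0
    else if transmitters a r = {u} then (if pending a r u - 1 = 0 then 0 else 1)
    else if 2 ≤ #(transmitters a r) then counter a r u + 1
    else if #(transmitters a r) = 0 then counter a r u - 1
    else counter a r u := by
  rw [← if_congr mem_and_card_eq_one_iff rfl rfl]
  rfl

lemma pending_eq_zero_of_le (h : r ≤ u) : pending a r u = 0 := by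
  induction r with
  | zero => rfl
  | succ r ih =>
    have hT : transmitters a r ≠ {u} := fun hT =>
      absurd (lt_of_mem_transmitters (hT ▸ mem_singleton_self u)) (by omega)
    rw [pending_succ, if_neg hT, if_neg (by omega), ih (by omega)]

lemma lt_of_pending_pos (h : 0 < pending a r u) : u < r := by
  by_contra! hru
  rw [pending_eq_zero_of_le hru] at h
  exact lt_irrefl 0 h

lemma pending_succ_self (a : ℕ → ℕ) (u : ℕ) : pending a (u + 1) u = a u := by
  rw [pending_succ, pending_eq_zero_of_le le_rfl, if_pos rfl]
  split <;> omega

lemma pending_succ_add_heard (hu : u ≠ r) :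
    pending a (r + 1) u + (if transmitters a r = {u} then 1 else 0) = pending a r u := by
  rw [pending_succ, if_neg hu, add_zero]
  split_ifs with hT
  · have := pending_pos_of_mem_transmitters (hT ▸ mem_singleton_self u)
    omega
  · rfl

lemma pending_succ_of_not_heard (hu : u ≠ r) (hT : transmitters a r ≠ {u}) :
    pending a (r + 1) u = pending a r u := by
  simpa [hT] using pending_succ_add_heard (a := a) hu

lemma pending_succ_le (hu : u ≠ r) : pending a (r + 1) u ≤ pending a r u := by
  have := pending_succ_add_heard (a := a) hu
  omega

lemma pending_le_of_le (hu : u < r) (hrs : r ≤ s) : pending a s u ≤ pending a r u := by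
  induction s, hrs using Nat.le_induction with
  | base => exact le_rfl
  | succ s hrs ih => exact (pending_succ_le (by omega)).trans ih

lemma counter_succ_self (a : ℕ → ℕ) (u : ℕ) : counter a (u + 1) u = 0 := by
  rw [counter_succ, if_pos (pending_eq_zero_of_le le_rfl)]

lemma counter_succ_of_heard (hT : transmitters a r = {w}) :
    counter a (r + 1) w = if pending a (r + 1) w = 0 then 0 else 1 := by
  have hw : w ∈ transmitters a r := hT ▸ mem_singleton_self w
  have hp := pending_succ_add_heard (a := a) (lt_of_mem_transmitters hw).ne
  rw [if_pos hT] at hp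
  rw [counter_succ, if_neg (pending_pos_of_mem_transmitters hw).ne', if_pos hT]
  split_ifs <;> omega

lemma counter_succ_of_heard_ne (hT : transmitters a r = {w}) (hu : 0 < pending a r u)
    (huw : u ≠ w) : counter a (r + 1) u = counter a r u := by
  have hcard : #(transmitters a r) = 1 := by rw [hT, card_singleton]
  rw [counter_succ, if_neg hu.ne', if_neg (fun h => huw (singleton_inj.1 (h.symm.trans hT))),
    if_neg (by omega), if_neg (by omega)]

lemma counter_succ_of_collision (h : 2 ≤ #(transmitters a r)) (hu : 0 < pending a r u) :
    counter a (r + 1) u = counter a r u + 1 := by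
  rw [counter_succ, if_neg hu.ne', if_neg (fun hT => by rw [hT, card_singleton] at h; omega),
    if_pos h]

lemma counter_succ_of_silence (h : #(transmitters a r) = 0) (hu : 0 < pending a r u) :
    counter a (r + 1) u = counter a r u - 1 := by
  rw [counter_succ, if_neg hu.ne', if_neg (fun hT => by rw [hT, card_singleton] at h; omega),
    if_neg (by omega), if_pos h]

lemma two_le_counter_of_not_mem (hu : 0 < pending a r u) (hT : u ∉ transmitters a r) :
    2 ≤ counter a r u := by
  simp only [mem_transmitters, not_and, not_le] at hT
  have := hT (lt_of_pending_pos hu) hu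
  omega

structure CounterInvariant (a : ℕ → ℕ) (r : ℕ) : Prop where
  counter_lt : ∀ ⦃u x⦄, u < x → 0 < pending a r u → 0 < pending a r x →
    counter a r x < counter a r u
  one_le_counter : ∀ ⦃u⦄, u + 1 < r → 0 < pending a r u → 1 ≤ counter a r u

namespace CounterInvariant

lemma counter_nonneg (h : CounterInvariant a r) (hu : 0 < pending a r u) :
    0 ≤ counter a r u := by
  obtain hur | rfl : u + 1 < r ∨ r = u + 1 := by have := lt_of_pending_pos hu; omega
  · have := h.one_le_counter hur hu
    omega
  · rw [counter_succ_self]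

lemma le_of_heard (h : CounterInvariant a r) (hT : transmitters a r = {w})
    (hu : 0 < pending a r u) : u ≤ w := by
  by_contra! hwu
  have hw := mem_transmitters.1 (hT ▸ mem_singleton_self w)
  have hlt := h.counter_lt hwu hw.2.1 hu
  have hu' : u ∈ transmitters a r := mem_transmitters.2 ⟨lt_of_pending_pos hu, hu, by omega⟩
  rw [hT, mem_singleton] at hu'
  omega

lemma one_le_counter_succ (h : CounterInvariant a r) (hur : u < r)
    (hu : 0 < pending a (r + 1) u) : 1 ≤ counter a (r + 1) u := by
  have hu' : 0 < pending a r u := hu.trans_le (pending_succ_le hur.ne)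
  rcases eq_singleton_or_two_le_card_or_card_eq_zero (transmitters a r) with ⟨w, hT⟩ | hc | hc
  · by_cases huw : u = w
    · subst huw
      rw [counter_succ_of_heard hT, if_neg hu.ne']
    · rw [counter_succ_of_heard_ne hT hu' huw]
      have := two_le_counter_of_not_mem hu' (by simpa [hT] using huw)
      omega
  · rw [counter_succ_of_collision hc hu']
    have := h.counter_nonneg hu'
    omega
  · rw [counter_succ_of_silence hc hu']
    have := two_le_counter_of_not_mem hu' (by simp [card_eq_zero.1 hc])
    omega

lemma counter_succ_lt (h : CounterInvariant a r) (hux : u < x) (hxr : x < r)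
    (hu : 0 < pending a (r + 1) u) (hx : 0 < pending a (r + 1) x) :
    counter a (r + 1) x < counter a (r + 1) u := by
  have hu' : 0 < pending a r u := hu.trans_le (pending_succ_le (by omega))
  have hx' : 0 < pending a r x := hx.trans_le (pending_succ_le hxr.ne)
  have hlt := h.counter_lt hux hu' hx'
  rcases eq_singleton_or_two_le_card_or_card_eq_zero (transmitters a r) with ⟨w, hT⟩ | hc | hc
  · have hxw : x ≤ w := h.le_of_heard hT hx'
    have huw : u ≠ w := by omega
    have hu2 := two_le_counter_of_not_mem hu' (by simpa [hT] using huw)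
    rw [counter_succ_of_heard_ne hT hu' huw]
    rcases hxw.lt_or_eq with hxw | rfl
    · rwa [counter_succ_of_heard_ne hT hx' hxw.ne]
    · rw [counter_succ_of_heard hT, if_neg hx.ne']
      omega
  · rw [counter_succ_of_collision hc hu', counter_succ_of_collision hc hx']
    omega
  · rw [counter_succ_of_silence hc hu', counter_succ_of_silence hc hx']
    omega

lemma succ (h : CounterInvariant a r) : CounterInvariant a (r + 1) where
  counter_lt u x hux hu hx := by
    obtain hxr | rfl : x < r ∨ x = r := by have := lt_of_pending_pos hx; omega
    · exact h.counter_succ_lt hux hxr hu hx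
    · have := h.one_le_counter_succ hux hu
      rw [counter_succ_self]
      omega
  one_le_counter u hur hu := h.one_le_counter_succ (by omega) hu

end CounterInvariant

lemma counterInvariant (a : ℕ → ℕ) (r : ℕ) : CounterInvariant a r := by
  induction r with
  | zero => exact ⟨fun _ _ _ hu => (lt_irrefl 0 hu).elim, fun _ _ hu => (lt_irrefl 0 hu).elim⟩
  | succ r ih => exact ih.succ

lemma pos_of_two_le_card_transmitters (h : 2 ≤ #(transmitters a (r + 1))) : 0 < a r := by
  have hinv := counterInvariant a (r + 1)
  have hfresh : ∀ ⦃u x⦄, u ∈ transmitters a (r + 1) → x ∈ transmitters a (r + 1) →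
      u < x → x = r := by
    intro u x hu hx hux
    rw [mem_transmitters] at hu hx
    have := hinv.counter_lt hux hu.2.1 hx.2.1
    have := hinv.counter_nonneg hx.2.1
    by_contra hxr
    have := hinv.one_le_counter (by omega) hx.2.1
    omega
  obtain ⟨u, hu, x, hx, hux⟩ := one_lt_card.1 h
  have hr : r ∈ transmitters a (r + 1) := by
    rcases hux.lt_or_gt with hux | hxu
    · exact hfresh hu hx hux ▸ hx
    · exact hfresh hx hu hxu ▸ hu
  rw [← pending_succ_self a r]
  exact pending_pos_of_mem_transmitters hr

lemma transmitters_succ_eq_singleton_or (hv : 0 < pending a (v + 1) v) :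
    transmitters a (v + 1) = {v} ∨ ∃ w ∈ transmitters a (v + 1), w < v := by
  have hmem : v ∈ transmitters a (v + 1) :=
    mem_transmitters.2 ⟨lt_add_one v, hv, by rw [counter_succ_self]; norm_num⟩
  by_contra! h
  refine h.1 (eq_singleton_iff_unique_mem.2 ⟨hmem, fun w hw => ?_⟩)
  have := lt_of_mem_transmitters hw
  have := h.2 w hw
  omega

lemma pending_eq_of_younger_pending_pos (hwv : w < v) (hvr : v < r) (hrs : r ≤ s)
    (hv : 0 < pending a s v) : pending a s w = pending a r w := by
  induction s, hrs using Nat.le_induction with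
  | base => rfl
  | succ s hrs ih =>
    have hv' : 0 < pending a s v := hv.trans_le (pending_succ_le (by omega))
    have hT : transmitters a s ≠ {w} := fun hT =>
      absurd ((counterInvariant a s).le_of_heard hT hv') (by omega)
    rw [pending_succ_of_not_heard (by omega) hT, ih hv']

def collisions (a : ℕ → ℕ) (m n : ℕ) : ℕ :=
  ∑ r ∈ Ico m n, if 2 ≤ #(transmitters a r) then 1 else 0

lemma collisions_succ_le_sum (hm : ¬2 ≤ #(transmitters a m)) (hmn : m ≤ n) :
    collisions a m (n + 1) ≤ ∑ u ∈ Ico m n, a u := by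
  induction n, hmn using Nat.le_induction with
  | base => rw [collisions, Nat.Ico_succ_singleton, sum_singleton, if_neg hm]; exact Nat.zero_le _
  | succ n hmn ih =>
    rw [collisions, sum_Ico_succ_top (by omega), ← collisions, sum_Ico_succ_top hmn]
    split_ifs with hc
    · have := pos_of_two_le_card_transmitters hc
      omega
    · omega

lemma sum_pending_succ_add_heard {J : Finset ℕ} (hJ : r ∉ J) :
    ∑ u ∈ J, pending a (r + 1) u + ∑ u ∈ J, (if transmitters a r = {u} then 1 else 0) =
      ∑ u ∈ J, pending a r u := by
  rw [← sum_add_distrib]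
  exact sum_congr rfl fun u hu => pending_succ_add_heard (ne_of_mem_of_not_mem hu hJ)

def potential (a : ℕ → ℕ) (v s : ℕ) : ℤ :=
  s + counter a s v + 2 * pending a s v + (∑ u ∈ Ico (v + 1) s, pending a s u : ℕ)

lemma potential_succ_le (hvr : v < r) (hv : 0 < pending a r v) :
    potential a v (r + 1) ≤
      potential a v r + 2 * (if 2 ≤ #(transmitters a r) then 1 else 0) + a r := by
  have hY := sum_pending_succ_add_heard (a := a) (r := r) (J := Ico (v + 1) r) (by simp)
  have hp := pending_succ_add_heard (a := a) hvr.ne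
  unfold potential
  rw [sum_Ico_succ_top (by omega), pending_succ_self]
  rcases eq_singleton_or_two_le_card_or_card_eq_zero (transmitters a r) with ⟨w, hT⟩ | hc
  · have hwr := lt_of_mem_transmitters (hT ▸ mem_singleton_self w)
    rw [if_neg (by simp [hT])]
    simp only [hT, singleton_inj, sum_ite_eq, mem_Ico] at hY hp
    rcases ((counterInvariant a r).le_of_heard hT hv).lt_or_eq with hvw | rfl
    · rw [if_pos ⟨hvw, hwr⟩] at hY
      rw [if_neg hvw.ne'] at hp
      rw [counter_succ_of_heard_ne hT hv hvw.ne]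
      omega
    · rw [if_neg (by omega)] at hY
      rw [if_pos rfl] at hp
      have := (counterInvariant a r).counter_nonneg hv
      have := counter_succ_of_heard hT
      split_ifs at this <;> omega
  · have hT : ∀ u, transmitters a r ≠ {u} := fun u hT => by
      rw [hT, card_singleton] at hc
      omega
    simp only [hT, if_false, sum_const_zero, add_zero] at hY hp
    rw [hp, hY]
    rcases hc with hc | hc
    · rw [counter_succ_of_collision hc hv, if_pos hc]
      omega
    · rw [counter_succ_of_silence hc hv, if_neg (by omega)]
      omega

lemma potential_le (hvs : v + 1 ≤ s) (hv : 0 < pending a s v) :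
    potential a v s ≤
      v + 1 + 2 * a v + 2 * collisions a (v + 1) s + ∑ u ∈ Ico (v + 1) s, a u := by
  induction s, hvs using Nat.le_induction with
  | base => simp [potential, counter_succ_self, pending_succ_self, collisions]
  | succ s hvs ih =>
    have hv' : 0 < pending a s v := hv.trans_le (pending_succ_le (by omega))
    have hstep := potential_succ_le (by omega) hv'
    have := ih hv'
    have hC : collisions a (v + 1) (s + 1) =
        collisions a (v + 1) s + if 2 ≤ #(transmitters a s) then 1 else 0 :=
      sum_Ico_succ_top hvs _
    rw [sum_Ico_succ_top hvs]
    split_ifs at hstep hC <;> omega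

lemma add_two_le_of_heard (hT : transmitters a (v + 1) = {v}) (ht : v + 2 ≤ t)
    (hv : 0 < pending a t v) : t + 2 ≤ v + 2 * a v + 3 * ∑ u ∈ Ico (v + 1) t, a u := by
  have hP := potential_le (by omega) hv
  have hc := (counterInvariant a t).one_le_counter (by omega) hv
  obtain ⟨s, rfl⟩ : ∃ s, t = s + 1 := ⟨t - 1, by omega⟩
  have hC := collisions_succ_le_sum (a := a) (m := v + 1) (n := s)
    (by rw [hT, card_singleton]; omega) (by omega)
  rw [sum_Ico_succ_top (by omega)] at hP ⊢
  unfold potential at hP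
  omega

lemma _root_.Admissible.sub_mul_le_of_heard {ρ : ℝ} {b : ℕ} (ha : Admissible ρ b a)
    (hT : transmitters a (v + 1) = {v}) (ht : v + 2 ≤ t) (hv : 0 < pending a t v) :
    ((t : ℝ) - v) * (1 - 3 * ρ) ≤ 3 * b - 3 := by
  have hN : (t : ℝ) + 2 ≤ v + 2 * a v + 3 * (∑ u ∈ Ico (v + 1) t, a u : ℕ) := by
    exact_mod_cast add_two_le_of_heard hT ht hv
  have hav : (1 : ℝ) ≤ a v := by
    have := hv.trans_le (pending_le_of_le (lt_add_one v) (by omega))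
    rw [pending_succ_self] at this
    exact_mod_cast this
  have hbudget := ha v (t - v)
  rw [Nat.add_sub_cancel' (by omega), sum_eq_sum_Ico_succ_bot (by omega), Nat.cast_add,
    Nat.cast_sub (by omega)] at hbudget
  linarith

lemma _root_.Admissible.sub_mul_le_of_pending_pos {ρ : ℝ} {b : ℕ} (h0 : 0 < ρ)
    (hρ : ρ < 1 / 3) (hb : 1 < b) (ha : Admissible ρ b a) (v t : ℕ) (hv : 0 < pending a t v) :
    ((t : ℝ) - v) * (1 - 3 * ρ) ≤ 3 * b - 3 := by
  induction v using Nat.strong_induction_on generalizing t with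
  | _ v ih =>
  have hb' : (2 : ℝ) ≤ b := by exact_mod_cast hb
  obtain rfl | ht : t = v + 1 ∨ v + 2 ≤ t := by have := lt_of_pending_pos hv; omega
  · push_cast
    linarith
  have hv1 : 0 < pending a (v + 1) v := hv.trans_le (pending_le_of_le (lt_add_one v) (by omega))
  rcases transmitters_succ_eq_singleton_or hv1 with hT | ⟨w, hw, hwv⟩
  · exact ha.sub_mul_le_of_heard hT ht hv
  · have hwt : 0 < pending a t w := by
      rw [pending_eq_of_younger_pending_pos hwv (lt_add_one v) (by omega) hv]
      exact pending_pos_of_mem_transmitters hw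
    have hw' : (w : ℝ) < v := by exact_mod_cast hwv
    nlinarith [ih w hwv t hwt]

end CountingBackoff

theorem counting_backoff_latency_bound (ρ : ℝ) (b : ℕ)
    (h0 : 0 < ρ) (hρ : ρ < 1/3) (hb : 1 < b)
    (a : ℕ → ℕ) (ha : Admissible ρ b a) (v t : ℕ)
    (ht : (v : ℝ) + (3 * b - 3) / (1 - 3 * ρ) < t) :
    (cbCfg a t).1 v = 0 := by
  by_contra hv
  have hlat := ha.sub_mul_le_of_pending_pos h0 hρ hb v t (Nat.pos_of_ne_zero hv)
  rw [← lt_sub_iff_add_lt', div_lt_iff₀ (by linarith)] at ht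
  linarith
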